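/- Let (X,d) be a metric space and 𝔅 a bornology on X. If C(X,ℝ) with the topology τ^s_𝔅 is strictly Fréchet–Urysohn, then X satisfies S₁(𝒪_{𝔅^s},Γ_{𝔅^s}): for every sequence (𝒰_n) of 𝔅^s-covers of X one can choose U_n ∈ 𝒰_n so that {U_n : n ∈ ℕ} is a γ_{𝔅^s}-cover of X. -/

import Mathlib

open Set Metric

variable {X : Type*} [MetricSpace X]

/-- The δ-enlargement of a set `B`: union of open δ-balls around points of `B`. -/
def enl (B : Set X) (δ : ℝ) : Set X := ⋃ b ∈ B, Metric.ball b δ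

/-- A bornology (in the sense of Hu/Hogbe-Nlend): a family of nonempty subsets
covering `X`, closed under finite unions and hereditary. -/
def IsBorn (𝔅 : Set (Set X)) : Prop :=
  (∀ B ∈ 𝔅, B.Nonempty) ∧ (⋃₀ 𝔅 = Set.univ) ∧
  (∀ B₁ ∈ 𝔅, ∀ B₂ ∈ 𝔅, B₁ ∪ B₂ ∈ 𝔅) ∧
  (∀ B ∈ 𝔅, ∀ A : Set X, A ⊆ B → A.Nonempty → A ∈ 𝔅)

/-- The bornology has a base consisting of closed sets. -/
def HasClosedBase (𝔅 : Set (Set X)) : Prop :=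
  ∃ 𝔅₀ ⊆ 𝔅, (∀ B ∈ 𝔅₀, IsClosed B) ∧ ∀ B ∈ 𝔅, ∃ B₀ ∈ 𝔅₀, B ⊆ B₀

/-- A strong 𝔅-cover (𝔅ˢ-cover): an open cover 𝒰 of X with X ∉ 𝒰 such that for
every `B ∈ 𝔅` some δ-enlargement of `B` lies in a member of 𝒰. -/
def IsBsCover (𝔅 : Set (Set X)) (𝒰 : Set (Set X)) : Prop :=
  (∀ U ∈ 𝒰, IsOpen U) ∧ Set.univ ∉ 𝒰 ∧ ⋃₀ 𝒰 = Set.univ ∧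
  ∀ B ∈ 𝔅, ∃ U ∈ 𝒰, ∃ δ > 0, enl B δ ⊆ U

/-- A γ_{𝔅ˢ}-cover: an infinite countable open cover `(U n)` such that for every
`B ∈ 𝔅` there are `n₀` and positive reals `δ n` (for `n ≥ n₀`) with
`enl B (δ n) ⊆ U n` for all `n ≥ n₀`. -/
def IsGammaCover (𝔅 : Set (Set X)) (U : ℕ → Set X) : Prop :=
  (∀ n, IsOpen (U n)) ∧ (⋃ n, U n) = Set.univ ∧ (Set.range U).Infinite ∧
  ∀ B ∈ 𝔅, ∃ n₀ : ℕ, ∃ δ : ℕ → ℝ, ∀ n ≥ n₀, 0 < δ n ∧ enl B (δ n) ⊆ U n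

/-- `g` belongs to the basic τˢ_𝔅-neighborhood `[B,ε]ˢ(f)`. -/
def SNbhd (B : Set X) (ε : ℝ) (f g : C(X, ℝ)) : Prop :=
  ∃ δ > 0, ∀ x ∈ enl B δ, |g x - f x| < ε

/-- `f` lies in the τˢ_𝔅-closure of `A`. -/
def SCl (𝔅 : Set (Set X)) (A : Set C(X, ℝ)) (f : C(X, ℝ)) : Prop :=
  ∀ B ∈ 𝔅, ∀ ε > 0, ∃ g ∈ A, SNbhd B ε f g

/-- The sequence `g` τˢ_𝔅-converges to `f`. -/
def SConv (𝔅 : Set (Set X)) (g : ℕ → C(X, ℝ)) (f : C(X, ℝ)) : Prop :=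
  ∀ B ∈ 𝔅, ∀ ε > 0, ∃ N : ℕ, ∀ n ≥ N, SNbhd B ε f (g n)

/-! Let `Aₙ` be the set of continuous functions equal to `1` off some member of `𝒰ₙ`. A Urysohn
function vanishing on an enlargement of `B` and equal to `1` off a larger enlargement contained in
a member of `𝒰ₙ` shows that `0` lies in the τˢ_𝔅-closure of every `Aₙ`. Strict Fréchet–Urysohn
gives `gₙ ∈ Aₙ` converging to `0`, with witnesses `Uₙ ∈ 𝒰ₙ`. Once `|gₙ| < 1` on an enlargement
of `B`, that enlargement avoids the set where `gₙ = 1`, so it lies in `Uₙ`. Applied to singletons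
this makes `(Uₙ)` a cover, and since no `Uₙ` is all of `X`, its range is infinite. -/

open Filter

theorem enl_eq_thickening (B : Set X) (δ : ℝ) : enl B δ = thickening δ B :=
  thickening_eq_biUnion_ball.symm

theorem IsBorn.singleton_mem {Y : Type*} {𝔅 : Set (Set Y)} (h𝔅 : IsBorn 𝔅) (y : Y) :
    {y} ∈ 𝔅 := by
  obtain ⟨B, hB, hyB⟩ : y ∈ ⋃₀ 𝔅 := h𝔅.2.1 ▸ mem_univ y
  exact h𝔅.2.2.2 B hB {y} (singleton_subset_iff.2 hyB) (singleton_nonempty y)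

theorem exists_continuous_zero_on_thickening_one_off_thickening {Y : Type*}
    [PseudoMetricSpace Y] (B : Set Y) {δ : ℝ} (hδ : 0 < δ) :
    ∃ f : C(Y, ℝ), EqOn f 0 (thickening (δ / 2) B) ∧ EqOn f 1 (thickening δ B)ᶜ := by
  have hdisj : Disjoint (cthickening (δ / 2) B) (thickening δ B)ᶜ :=
    disjoint_compl_right_iff_subset.2 (cthickening_subset_thickening' hδ (by linarith) B)
  obtain ⟨f, hf0, hf1, -⟩ :=
    exists_continuous_zero_one_of_isClosed isClosed_cthickening isOpen_thickening.isClosed_compl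
      hdisj
  exact ⟨f, hf0.mono (thickening_subset_cthickening _ _), hf1⟩

theorem infinite_range_of_eventually_mem {α ι : Type*} {l : Filter ι} [l.NeBot]
    {u : ι → Set α} (hne : ∀ i, u i ≠ univ) (hmem : ∀ x, ∀ᶠ i in l, x ∈ u i) :
    (range u).Infinite := by
  intro hfin
  have := hfin.to_subtype
  -- pick a point outside each of the finitely many sets; eventually `u i` contains all of them
  have hout : ∀ V : range u, ∃ x, x ∉ (V : Set α) := by
    rintro ⟨_, i, rfl⟩
    simpa [eq_univ_iff_forall] using hne i
  choose x hx using hout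
  obtain ⟨i, hi⟩ := (eventually_all.2 fun V => hmem (x V)).exists
  exact hx ⟨u i, mem_range_self i⟩ (hi ⟨u i, mem_range_self i⟩)

section

variable {𝔅 : Set (Set X)}

theorem sCl_zero_of_isBsCover {𝒰 : Set (Set X)} (h𝒰 : IsBsCover 𝔅 𝒰) :
    SCl 𝔅 {f | ∃ U ∈ 𝒰, EqOn f 1 Uᶜ} 0 := by
  intro B hB ε hε
  obtain ⟨U, hU, δ, hδ, hBU⟩ := h𝒰.2.2.2 B hB
  rw [enl_eq_thickening] at hBU
  obtain ⟨f, hf0, hf1⟩ := exists_continuous_zero_on_thickening_one_off_thickening B hδ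
  refine ⟨f, ⟨U, hU, hf1.mono (compl_subset_compl.2 hBU)⟩, δ / 2, by positivity, fun x hx => ?_⟩
  rw [enl_eq_thickening] at hx
  simpa [hf0 hx] using hε

theorem exists_enl_subset_of_sNbhd {B U : Set X} {g : C(X, ℝ)} (hg : EqOn g 1 Uᶜ)
    (h : SNbhd B 1 0 g) : ∃ δ > 0, enl B δ ⊆ U := by
  obtain ⟨δ, hδ, hlt⟩ := h
  refine ⟨δ, hδ, fun x hx => by_contra fun hxU => ?_⟩
  simpa [hg hxU] using hlt x hx

theorem isGammaCover_of_eventually {u : ℕ → Set X} (hsingle : ∀ x, {x} ∈ 𝔅)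
    (hopen : ∀ n, IsOpen (u n)) (hne : ∀ n, u n ≠ univ)
    (hev : ∀ B ∈ 𝔅, ∀ᶠ n in atTop, ∃ δ > 0, enl B δ ⊆ u n) : IsGammaCover 𝔅 u := by
  have hmem : ∀ x, ∀ᶠ n in atTop, x ∈ u n := fun x =>
    (hev {x} (hsingle x)).mono fun n ⟨δ, hδ, hsub⟩ =>
      hsub (mem_iUnion₂.2 ⟨x, rfl, mem_ball_self hδ⟩)
  refine ⟨hopen, eq_univ_of_forall fun x => mem_iUnion.2 (hmem x).exists,
    infinite_range_of_eventually_mem hne hmem, fun B hB => ?_⟩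
  obtain ⟨N, hN⟩ := eventually_atTop.1 (hev B hB)
  choose! δ hδ hsub using hN
  exact ⟨N, δ, fun n hn => ⟨hδ n hn, hsub n hn⟩⟩

end

theorem statement14 (𝔅 : Set (Set X)) (h𝔅 : IsBorn 𝔅)
    (hSFU : ∀ f : C(X, ℝ), ∀ A : ℕ → Set C(X, ℝ), (∀ n, SCl 𝔅 (A n) f) →
      ∃ g : ℕ → C(X, ℝ), (∀ n, g n ∈ A n) ∧ SConv 𝔅 g f) :
    ∀ 𝒰 : ℕ → Set (Set X), (∀ n, IsBsCover 𝔅 (𝒰 n)) →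
      ∃ u : ℕ → Set X, (∀ n, u n ∈ 𝒰 n) ∧ IsGammaCover 𝔅 u := by
  intro 𝒰 h𝒰
  obtain ⟨g, hgA, hg⟩ := hSFU 0 (fun n => {f | ∃ U ∈ 𝒰 n, EqOn f 1 Uᶜ})
    fun n => sCl_zero_of_isBsCover (h𝒰 n)
  choose u hu𝒰 hgu using hgA
  refine ⟨u, hu𝒰, isGammaCover_of_eventually h𝔅.singleton_mem
    (fun n => (h𝒰 n).1 _ (hu𝒰 n)) (fun n hn => (h𝒰 n).2.1 (hn ▸ hu𝒰 n)) fun B hB => ?_⟩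
  obtain ⟨N, hN⟩ := hg B hB 1 one_pos
  exact eventually_atTop.2 ⟨N, fun n hn => exists_enl_subset_of_sNbhd (hgu n) (hN n hn)⟩
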